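/- arXiv:1305.6644 — 6 statements merged into one kernel-verified Lean document; each statement's English description precedes it below -/
import Mathlib

section
/- Let A, φ₀, φ₁ be real numbers and δ = φ₁ − φ₀. Then the following symmetry identities hold: Y(2A, δ−A, φ₀) = −Y(−2A, δ+A, −φ₁), Y(2A, δ−A, φ₀) = −Y(−2A, −δ+A, −φ₀), X(2A, δ−A, φ₀) = X(−2A, δ+A, −φ₁), and X(2A, δ−A, φ₀) = X(−2A, −δ+A, −φ₀). Consequently the function A ↦ Y(2A, δ−A, φ₀) has the same roots, with opposite sign, as the corresponding functions for the reversed problem (angles −φ₁, −φ₀) and the mirrored problem (angles −φ₀, −φ₁). -/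
open Real

/-- `X a b c = ∫₀¹ cos(a τ²/2 + b τ + c) dτ` -/
noncomputable def X (a b c : ℝ) : ℝ := ∫ τ in (0:ℝ)..1, Real.cos (a * τ ^ 2 / 2 + b * τ + c)

/-- `Y a b c = ∫₀¹ sin(a τ²/2 + b τ + c) dτ` -/
noncomputable def Y (a b c : ℝ) : ℝ := ∫ τ in (0:ℝ)..1, Real.sin (a * τ ^ 2 / 2 + b * τ + c)

lemma Y_neg (a b c : ℝ) : Y a b c = - Y (-a) (-b) (-c) := by
  unfold Y
  rw [← intervalIntegral.integral_neg]
  congr 1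
  funext τ
  rw [← Real.sin_neg]
  congr 1
  ring

lemma X_neg (a b c : ℝ) : X a b c = X (-a) (-b) (-c) := by
  unfold X
  congr 1
  funext τ
  rw [← Real.cos_neg]
  congr 1
  ring

lemma Y_flip (a b c : ℝ) : Y a b c = Y a (-(a + b)) (a / 2 + b + c) := by
  unfold Y
  have h : (∫ τ in (0:ℝ)..1, Real.sin (a * (1 - τ) ^ 2 / 2 + b * (1 - τ) + c))
      = ∫ τ in (0:ℝ)..1, Real.sin (a * τ ^ 2 / 2 + b * τ + c) := by
    have := intervalIntegral.integral_comp_sub_left (a := (0:ℝ)) (b := 1)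
      (fun τ => Real.sin (a * τ ^ 2 / 2 + b * τ + c)) 1
    simpa using this
  rw [← h]
  congr 1
  funext τ
  congr 1
  ring

lemma X_flip (a b c : ℝ) : X a b c = X a (-(a + b)) (a / 2 + b + c) := by
  unfold X
  have h : (∫ τ in (0:ℝ)..1, Real.cos (a * (1 - τ) ^ 2 / 2 + b * (1 - τ) + c))
      = ∫ τ in (0:ℝ)..1, Real.cos (a * τ ^ 2 / 2 + b * τ + c) := by
    have := intervalIntegral.integral_comp_sub_left (a := (0:ℝ)) (b := 1)
      (fun τ => Real.cos (a * τ ^ 2 / 2 + b * τ + c)) 1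
    simpa using this
  rw [← h]
  congr 1
  funext τ
  congr 1
  ring

lemma Y_rev (A φ₀ φ₁ : ℝ) :
    Y (2 * A) ((φ₁ - φ₀) - A) φ₀ = - Y (-(2 * A)) ((φ₁ - φ₀) + A) (-φ₁) := by
  rw [Y_flip, Y_neg]
  congr 2 <;> ring

lemma Y_mir (A φ₀ φ₁ : ℝ) :
    Y (2 * A) ((φ₁ - φ₀) - A) φ₀ = - Y (-(2 * A)) (-(φ₁ - φ₀) + A) (-φ₀) := by
  rw [Y_neg]
  congr 2 <;> ring

theorem stmt0 (A φ₀ φ₁ δ : ℝ) (hδ : δ = φ₁ - φ₀) :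
    Y (2 * A) (δ - A) φ₀ = - Y (-(2 * A)) (δ + A) (-φ₁) ∧
    Y (2 * A) (δ - A) φ₀ = - Y (-(2 * A)) (-δ + A) (-φ₀) ∧
    X (2 * A) (δ - A) φ₀ = X (-(2 * A)) (δ + A) (-φ₁) ∧
    X (2 * A) (δ - A) φ₀ = X (-(2 * A)) (-δ + A) (-φ₀) ∧
    -- consequence: same roots with opposite sign for the reversed problem …
    (∀ B : ℝ, Y (2 * B) (δ - B) φ₀ = 0 ↔ Y (2 * (-B)) (δ - (-B)) (-φ₁) = 0) ∧
    -- … and for the mirrored problem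
    (∀ B : ℝ, Y (2 * B) (δ - B) φ₀ = 0 ↔ Y (2 * (-B)) (-δ - (-B)) (-φ₀) = 0) := by
  subst hδ
  refine ⟨Y_rev A φ₀ φ₁, Y_mir A φ₀ φ₁, ?_, ?_, ?_, ?_⟩
  · rw [X_flip, X_neg]
    congr 1 <;> ring
  · rw [X_neg]
    congr 1 <;> ring
  · intro B
    have h := Y_rev B φ₀ φ₁
    rw [show 2 * (-B) = -(2 * B) by ring, show (φ₁ - φ₀) - (-B) = (φ₁ - φ₀) + B by ring,
      h, neg_eq_zero]
  · intro B
    have h := Y_mir B φ₀ φ₁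
    rw [show 2 * (-B) = -(2 * B) by ring, show -(φ₁ - φ₀) - (-B) = -(φ₁ - φ₀) + B by ring,
      h, neg_eq_zero]
end

section
/- Let φ₀, φ₁ be real numbers with δ = φ₁ − φ₀ > 0, let h(A) = X(2A, δ−A, φ₀), and for A > 0 set θ = (δ−A)²/(4A). If 0 < A ≤ δ then 2√A · h(A) = p̄(θ), and if A ≥ δ then 2√A · h(A) = q̄(θ). -/
open Real

/-- `pbar φ₀ δ θ = ∫_θ^{θ+δ} cos(u + φ₀ - θ)/√u du` -/
noncomputable def pbar (φ₀ δ θ : ℝ) : ℝ := ∫ u in θ..(θ + δ), Real.cos (u + φ₀ - θ) / Real.sqrt u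

/-- `qbar φ₀ δ θ = pbar φ₀ δ θ + 2 ∫₀^θ cos(u + φ₀ - θ)/√u du` -/
noncomputable def qbar (φ₀ δ θ : ℝ) : ℝ :=
  pbar φ₀ δ θ + 2 * ∫ u in (0:ℝ)..θ, Real.cos (u + φ₀ - θ) / Real.sqrt u

/-!
Completing the square, `A τ² + (δ - A) τ = (√A τ + s₀)² - θ` with `s₀ = (δ - A) / (2√A)`, so
`2√A · h(A) = 2 ∫_{s₀}^{s₁} cos(s² + φ₀ - θ) ds` with `s₀² = θ`, `s₁² = θ + δ`. The substitution
`u = s²` turns this into `pbar` when `s₀ ≥ 0`; when `s₀ < 0` the part over `[s₀, -s₀]` is folded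
onto `[0, -s₀]` by evenness, which yields the extra `2 ∫₀^θ` of `qbar`.
-/

open MeasureTheory Set intervalIntegral

theorem integral_div_sqrt_eq_two_mul_integral_comp_sq (g : ℝ → ℝ) {a b : ℝ} (ha : 0 ≤ a)
    (hab : a ≤ b) : ∫ u in a ^ 2..b ^ 2, g u / √u = 2 * ∫ s in a..b, g (s ^ 2) := by
  have hmono : StrictMonoOn (· ^ 2 : ℝ → ℝ) (Icc a b) :=
    (pow_left_strictMonoOn₀ two_ne_zero).mono fun s hs => ha.trans hs.1
  have himage : (· ^ 2 : ℝ → ℝ) '' Ioo a b = Ioo (a ^ 2) (b ^ 2) :=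
    (continuous_pow 2).continuousOn.image_Ioo_of_strictMonoOn hab hmono
  rw [integral_of_le (pow_le_pow_left₀ ha hab 2), integral_of_le hab,
    integral_Ioc_eq_integral_Ioo, integral_Ioc_eq_integral_Ioo, ← himage,
    integral_image_eq_integral_abs_deriv_smul measurableSet_Ioo
      (fun s _ => (hasDerivAt_pow 2 s).hasDerivWithinAt) (hmono.injOn.mono Ioo_subset_Icc_self),
    ← MeasureTheory.integral_const_mul]
  refine setIntegral_congr_fun measurableSet_Ioo fun s hs => ?_
  have hs : 0 < s := ha.trans_lt hs.1
  rw [sqrt_sq hs.le, smul_eq_mul]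
  norm_num [abs_of_pos hs]
  field_simp

theorem sqrt_mul_X_eq_integral_cos_sq {A : ℝ} (hA : 0 < A) (b c : ℝ) :
    √A * X (2 * A) b c =
      ∫ s in b / (2 * √A)..(b + 2 * A) / (2 * √A), cos (s ^ 2 + c - b ^ 2 / (4 * A)) := by
  obtain ⟨r, hr, rfl⟩ : ∃ r, 0 < r ∧ A = r ^ 2 := ⟨√A, sqrt_pos.2 hA, (sq_sqrt hA.le).symm⟩
  have hsquare : ∀ τ : ℝ, 2 * r ^ 2 * τ ^ 2 / 2 + b * τ + c
      = (r * τ + b / (2 * r)) ^ 2 + c - b ^ 2 / (4 * r ^ 2) := fun τ => by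
    field_simp; ring
  have hupper : r * 1 + b / (2 * r) = (b + 2 * r ^ 2) / (2 * r) := by
    field_simp; ring
  simp_rw [sqrt_sq hr.le, X, hsquare]
  rw [integral_comp_mul_add (fun s => cos (s ^ 2 + c - b ^ 2 / (4 * r ^ 2))) hr.ne', mul_zero,
    zero_add, hupper, smul_eq_mul, mul_inv_cancel_left₀ hr.ne']

theorem integral_comp_sq_reflect (g : ℝ → ℝ) (a : ℝ) :
    ∫ s in a..0, g (s ^ 2) = ∫ s in 0..-a, g (s ^ 2) :=
  calc ∫ s in a..0, g (s ^ 2)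
      = ∫ s in -(-a)..-0, g (s ^ 2) := by rw [neg_neg, neg_zero]
    _ = ∫ s in 0..-a, g ((-s) ^ 2) := (integral_comp_neg _).symm
    _ = ∫ s in 0..-a, g (s ^ 2) := by simp only [neg_sq]

theorem stmt2_general (φ₀ δ : ℝ) (hδ : 0 < δ)
    (A : ℝ) (hA : 0 < A) (θ : ℝ) (hθ : θ = (δ - A) ^ 2 / (4 * A)) :
    (A ≤ δ → 2 * Real.sqrt A * X (2 * A) (δ - A) φ₀ = pbar φ₀ δ θ) ∧
    (δ ≤ A → 2 * Real.sqrt A * X (2 * A) (δ - A) φ₀ = qbar φ₀ δ θ) := by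
  set s₀ := (δ - A) / (2 * √A)
  set s₁ := (δ - A + 2 * A) / (2 * √A)
  have hs₀ : s₀ ^ 2 = θ := by rw [hθ, div_pow, mul_pow, sq_sqrt hA.le]; ring
  have hs₁ : s₁ ^ 2 = θ + δ := by rw [hθ, div_pow, mul_pow, sq_sqrt hA.le]; field_simp; ring
  have hs₀₁ : s₀ ≤ s₁ := div_le_div_of_nonneg_right (by linarith) (by positivity)
  have hX : 2 * √A * X (2 * A) (δ - A) φ₀ = 2 * ∫ s in s₀..s₁, cos (s ^ 2 + φ₀ - θ) := by
    rw [mul_assoc, sqrt_mul_X_eq_integral_cos_sq hA, ← hθ]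
  have hsubst {a b : ℝ} (ha : 0 ≤ a) (hab : a ≤ b) :=
    integral_div_sqrt_eq_two_mul_integral_comp_sq (fun u => cos (u + φ₀ - θ)) ha hab
  constructor
  · intro hAδ
    have hpbar := hsubst (div_nonneg (sub_nonneg.2 hAδ) (by positivity)) hs₀₁
    rw [hs₀, hs₁] at hpbar
    rw [hX, pbar, hpbar]
  · intro hδA
    have hs₀_nonpos : s₀ ≤ 0 := div_nonpos_of_nonpos_of_nonneg (by linarith) (by positivity)
    have hs₀_neg_le : -s₀ ≤ s₁ := by
      rw [← neg_div]; exact div_le_div_of_nonneg_right (by linarith) (by positivity)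
    have hinner := hsubst le_rfl (neg_nonneg.2 hs₀_nonpos)
    have hpbar := hsubst (neg_nonneg.2 hs₀_nonpos) hs₀_neg_le
    rw [neg_sq, hs₀, zero_pow two_ne_zero] at hinner
    rw [neg_sq, hs₀, hs₁] at hpbar
    have hcont : Continuous fun s : ℝ => cos (s ^ 2 + φ₀ - θ) := by fun_prop
    rw [hX, qbar, pbar, hpbar, ← integral_add_adjacent_intervals (b := -s₀)
      (hcont.intervalIntegrable _ _) (hcont.intervalIntegrable _ _),
      ← integral_add_adjacent_intervals (b := 0) (hcont.intervalIntegrable _ _)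
      (hcont.intervalIntegrable _ _),
      integral_comp_sq_reflect fun u => cos (u + φ₀ - θ)]
    linarith

theorem stmt2 (φ₀ φ₁ δ : ℝ) (hδdef : δ = φ₁ - φ₀) (hδ : 0 < δ)
    (A : ℝ) (hA : 0 < A) (θ : ℝ) (hθ : θ = (δ - A) ^ 2 / (4 * A)) :
    (A ≤ δ → 2 * Real.sqrt A * X (2 * A) (δ - A) φ₀ = pbar φ₀ δ θ) ∧
    (δ ≤ A → 2 * Real.sqrt A * X (2 * A) (δ - A) φ₀ = qbar φ₀ δ θ) :=
  stmt2_general φ₀ δ hδ A hA θ hθ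
end

section
/- Let φ₀, φ₁ be real numbers with 0 < −φ₀ < φ₁ < π. If p(0) > 0 then p(θ) ≠ 0 for every θ ≥ 0. If p(0) ≤ 0 then there is exactly one θ ≥ 0 with p(θ) = 0; moreover this unique root lies in the interval [0, θ★], where λ = (1 − cos φ₀)/(1 − cos φ₁) satisfies 0 < λ < 1 and θ★ = λ²/(1 − λ²) · (φ₁ − φ₀) > 0. -/
open Real
/-- `p φ₀ δ θ = ∫_θ^{θ+δ} sin(u + φ₀ - θ)/√u du` -/
noncomputable def p (φ₀ δ θ : ℝ) : ℝ := ∫ u in θ..(θ + δ), Real.sin (u + φ₀ - θ) / Real.sqrt u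

/-!
Substituting `x = u + φ₀ - θ` writes `p(θ) = I(s) := ∫_{φ₀}^{φ₁} sin x / √(x + s) dx` with
`s = θ - φ₀`, an integral whose kernel `sin x` changes sign exactly once, at `x = 0`. If this integral vanishes
at `s`, then for `s' ≠ s` the combination `I(s') - √(s/s') I(s)` has an integrand of the constant
sign of `s' - s`: the weight ratio `√(x + s)/√(x + s')` is monotone in `x` and equals `√(s/s')`
at the sign change. So `p` passes from negative to positive at each root; hence it has at most
one root, none if `p(0) > 0`. Bounding the negative part of the integral below by
`-(1 - cos φ₀)/√θ` and the positive part by `(1 - cos φ₁)/√(θ + δ)` shows `p > 0` beyond `θ★`,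
and the intermediate value theorem supplies the root when `p(0) ≤ 0`.
-/

open MeasureTheory Set

noncomputable def sinSqrtIntegral (a b s : ℝ) : ℝ := ∫ x in a..b, sin x / √(x + s)

lemma p_eq_sinSqrtIntegral (φ₀ φ₁ θ : ℝ) :
    p φ₀ (φ₁ - φ₀) θ = sinSqrtIntegral φ₀ φ₁ (θ - φ₀) := by
  have h := intervalIntegral.integral_comp_add_right
    (fun u => sin (u + φ₀ - θ) / √u) (a := φ₀) (b := φ₁) (θ - φ₀)
  simp only [add_sub_cancel, show ∀ x, x + (θ - φ₀) + φ₀ - θ = x by intro x; ring] at h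
  rw [sinSqrtIntegral, h, p]
  congr 1; ring

lemma intervalIntegrable_add_rpow_neg_half (a b t : ℝ) :
    IntervalIntegrable (fun x => (x + t) ^ (-(1 / 2) : ℝ)) volume a b := by
  simpa using ((intervalIntegral.intervalIntegrable_rpow' (a := a + t) (b := b + t)
    (r := -(1 / 2)) (by norm_num)).comp_add_right t)

lemma norm_sin_div_sqrt_le {x s t : ℝ} (hx : 0 < x + t) (hts : t ≤ s) :
    ‖sin x / √(x + s)‖ ≤ (x + t) ^ (-(1 / 2) : ℝ) := by
  rw [rpow_neg hx.le, ← sqrt_eq_rpow, norm_div, norm_eq_abs, norm_of_nonneg (sqrt_nonneg _),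
    ← one_div]
  exact div_le_div₀ zero_le_one (abs_sin_le_one x) (sqrt_pos.2 hx) (sqrt_le_sqrt (by linarith))

lemma aestronglyMeasurable_sin_div_sqrt (s : ℝ) (μ : Measure ℝ) :
    AEStronglyMeasurable (fun x => sin x / √(x + s)) μ :=
  (by fun_prop : Measurable fun x => sin x / √(x + s)).aestronglyMeasurable

lemma intervalIntegrable_sin_div_sqrt {a b s : ℝ} (ha : 0 ≤ a + s) (hb : 0 ≤ b + s) :
    IntervalIntegrable (fun x => sin x / √(x + s)) volume a b := by
  refine (intervalIntegrable_add_rpow_neg_half a b s).mono_fun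
    (aestronglyMeasurable_sin_div_sqrt s _) ?_
  filter_upwards [ae_restrict_mem measurableSet_uIoc] with x hx
  have hx : 0 < x + s := by rcases mem_uIoc.1 hx with h | h <;> linarith [h.1]
  simpa [norm_of_nonneg (rpow_nonneg hx.le _)] using norm_sin_div_sqrt_le hx le_rfl

lemma continuousOn_sinSqrtIntegral {a b : ℝ} (hab : a ≤ b) :
    ContinuousOn (sinSqrtIntegral a b) (Ici (-a)) := by
  intro s₀ hs₀
  apply intervalIntegral.continuousWithinAt_of_dominated_interval
    (bound := fun x => (x + -a) ^ (-(1 / 2) : ℝ))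
  · exact Filter.Eventually.of_forall fun s => aestronglyMeasurable_sin_div_sqrt s _
  · filter_upwards [self_mem_nhdsWithin] with s hs
    refine Filter.Eventually.of_forall fun x hx => norm_sin_div_sqrt_le ?_ hs
    rw [uIoc_of_le hab] at hx
    linarith [hx.1]
  · exact intervalIntegrable_add_rpow_neg_half a b (-a)
  · refine Filter.Eventually.of_forall fun x hx => ?_
    rw [uIoc_of_le hab] at hx
    have : 0 < x + s₀ := by linarith [hx.1, mem_Ici.1 hs₀]
    exact (continuousAt_const.div (by fun_prop : Continuous fun s => √(x + s)).continuousAt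
      (sqrt_pos.2 this).ne').continuousWithinAt

lemma intervalIntegral_pos_of_pos_on_punctured {f : ℝ → ℝ} {a b c : ℝ} (hac : a < c)
    (hcb : c < b) (hf : IntervalIntegrable f volume a b) (hpos : ∀ x ∈ Ioo a b, x ≠ c → 0 < f x) :
    0 < ∫ x in a..b, f x := by
  have hsub : ∀ {u v}, u ∈ uIcc a b → v ∈ uIcc a b → IntervalIntegrable f volume u v :=
    fun hu hv => hf.mono_set (uIcc_subset_uIcc hu hv)
  have ha : a ∈ uIcc a b := left_mem_uIcc
  have hb : b ∈ uIcc a b := right_mem_uIcc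
  have hc : c ∈ uIcc a b := Icc_subset_uIcc ⟨hac.le, hcb.le⟩
  rw [← intervalIntegral.integral_add_adjacent_intervals (hsub ha hc) (hsub hc hb)]
  exact add_pos
    (intervalIntegral.intervalIntegral_pos_of_pos_on (hsub ha hc)
      (fun x hx => hpos x ⟨hx.1, hx.2.trans hcb⟩ hx.2.ne) hac)
    (intervalIntegral.intervalIntegral_pos_of_pos_on (hsub hc hb)
      (fun x hx => hpos x ⟨hac.trans hx.1, hx.2⟩ hx.1.ne') hcb)

lemma mul_sin_pos {x : ℝ} (hx : x ≠ 0) (hlo : -π < x) (hhi : x < π) : 0 < x * sin x := by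
  rcases hx.lt_or_gt with h | h
  · exact mul_pos_of_neg_of_neg h (sin_neg_of_neg_of_neg_pi_lt h hlo)
  · exact mul_pos h (sin_pos_of_pos_of_lt_pi h hhi)

lemma sub_mul_sqrt_sub_sqrt_pos {A B : ℝ} (hA : 0 ≤ A) (hB : 0 ≤ B) (hAB : A ≠ B) :
    0 < (A - B) * (√A - √B) := by
  rcases hAB.lt_or_gt with h | h
  · exact mul_pos_of_neg_of_neg (sub_neg.2 h) (sub_neg.2 (sqrt_lt_sqrt hA h))
  · exact mul_pos (sub_pos.2 h) (sub_pos.2 (sqrt_lt_sqrt hB h))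

lemma sub_mul_sin_div_sqrt_sub_pos {x s s' : ℝ} (hx : x ≠ 0) (hlo : -π < x) (hhi : x < π)
    (hs : 0 < s) (hs' : 0 < s') (hxs : 0 < x + s) (hxs' : 0 < x + s') (hss' : s ≠ s') :
    0 < (s' - s) * (sin x / √(x + s') - √s / √s' * (sin x / √(x + s))) := by
  -- `D` has the sign of `(s' - s) * x`, and `sin x` that of `x`.
  set D := √(s' * (x + s)) - √(s * (x + s'))
  have hD : 0 < (s' * (x + s) - s * (x + s')) * D :=
    sub_mul_sqrt_sub_sqrt_pos (by positivity) (by positivity)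
      fun h => hss' (sub_eq_zero.1 ((mul_eq_zero.1 (by linear_combination h :
        (s' - s) * x = 0)).resolve_right hx)).symm
  have hnum : 0 < (s' - s) * sin x * D := by
    refine pos_of_mul_pos_right (a := x ^ 2) ?_ (sq_nonneg x)
    linear_combination mul_pos hD (mul_sin_pos hx hlo hhi)
  have hden : 0 < √s' * √(x + s) * √(x + s') := by positivity
  have key : (s' - s) * (sin x / √(x + s') - √s / √s' * (sin x / √(x + s)))
      = (s' - s) * sin x * D / (√s' * √(x + s) * √(x + s')) := by
    simp only [D, sqrt_mul hs'.le, sqrt_mul hs.le]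
    field_simp
  exact key ▸ div_pos hnum hden

section SignChange

variable {a b s s' : ℝ} (ha : -π ≤ a) (ha0 : a < 0) (hb0 : 0 < b) (hb : b ≤ π)
  (hs : -a ≤ s) (hs' : -a ≤ s')
include ha ha0 hb0 hb hs hs'

lemma sub_mul_sinSqrtIntegral_sub_pos (hss' : s ≠ s') :
    0 < (s' - s) * (sinSqrtIntegral a b s' - √s / √s' * sinSqrtIntegral a b s) := by
  have hint : ∀ t, -a ≤ t → IntervalIntegrable (fun x => sin x / √(x + t)) volume a b :=
    fun t ht => intervalIntegrable_sin_div_sqrt (by linarith) (by linarith)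
  rw [sinSqrtIntegral, sinSqrtIntegral, ← intervalIntegral.integral_const_mul,
    ← intervalIntegral.integral_sub (hint s' hs') ((hint s hs).const_mul _),
    ← intervalIntegral.integral_const_mul]
  refine intervalIntegral_pos_of_pos_on_punctured ha0 hb0
    (((hint s' hs').sub ((hint s hs).const_mul _)).const_mul _) fun x hx hx0 => ?_
  exact sub_mul_sin_div_sqrt_sub_pos hx0 (by linarith [hx.1]) (by linarith [hx.2])
    (by linarith) (by linarith) (by linarith [hx.1]) (by linarith [hx.1]) hss'

lemma sub_mul_sinSqrtIntegral_pos_of_eq_zero (hss' : s ≠ s')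
    (hroot : sinSqrtIntegral a b s = 0) : 0 < (s' - s) * sinSqrtIntegral a b s' := by
  simpa [hroot] using sub_mul_sinSqrtIntegral_sub_pos ha ha0 hb0 hb hs hs' hss'

end SignChange

lemma div_sqrt_add_le_sinSqrtIntegral {a b s : ℝ} (ha : -π ≤ a) (ha0 : a ≤ 0) (hb0 : 0 ≤ b)
    (hb : b ≤ π) (hs : 0 < a + s) :
    (cos a - 1) / √(a + s) + (1 - cos b) / √(b + s) ≤ sinSqrtIntegral a b s := by
  have hint : ∀ {u v}, a ≤ u → a ≤ v →
      IntervalIntegrable (fun x => sin x / √(x + s)) volume u v :=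
    fun hu hv => intervalIntegrable_sin_div_sqrt (by linarith) (by linarith)
  rw [sinSqrtIntegral, ← intervalIntegral.integral_add_adjacent_intervals
    (hint le_rfl ha0) (hint ha0 (ha0.trans hb0))]
  gcongr
  · calc (cos a - 1) / √(a + s) = ∫ x in a..0, sin x / √(a + s) := by
          rw [intervalIntegral.integral_div, integral_sin, cos_zero]
      _ ≤ _ := by
        refine intervalIntegral.integral_mono_on ha0
          ((continuous_sin.div_const _).intervalIntegrable _ _) (hint le_rfl ha0) fun x hx => ?_
        simp only [div_eq_mul_inv]
        exact mul_le_mul_of_nonpos_left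
          (inv_anti₀ (sqrt_pos.2 hs) (sqrt_le_sqrt (by linarith [hx.1])))
          (sin_nonpos_of_nonpos_of_neg_pi_le hx.2 (by linarith [hx.1]))
  · calc (1 - cos b) / √(b + s) = ∫ x in (0 : ℝ)..b, sin x / √(b + s) := by
          rw [intervalIntegral.integral_div, integral_sin, cos_zero]
      _ ≤ _ := by
        refine intervalIntegral.integral_mono_on hb0
          ((continuous_sin.div_const _).intervalIntegrable _ _) (hint ha0 (ha0.trans hb0))
          fun x hx => div_le_div_of_nonneg_left
            (sin_nonneg_of_nonneg_of_le_pi hx.1 (by linarith [hx.2]))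
            (sqrt_pos.2 (by linarith [hx.1])) (sqrt_le_sqrt (by linarith [hx.2]))

lemma one_sub_div_sq_pos {A B : ℝ} (hA : 0 < A) (hAB : A < B) : 0 < 1 - (A / B) ^ 2 := by
  rw [sub_pos, div_pow, div_lt_one (pow_pos (hA.trans hAB) 2)]
  exact pow_lt_pow_left₀ hAB hA.le two_ne_zero

lemma div_sq_div_one_sub_mul_pos {A B δ : ℝ} (hA : 0 < A) (hAB : A < B) (hδ : 0 < δ) :
    0 < (A / B) ^ 2 / (1 - (A / B) ^ 2) * δ :=
  mul_pos (div_pos (pow_pos (div_pos hA (hA.trans hAB)) 2) (one_sub_div_sq_pos hA hAB)) hδ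

lemma div_sqrt_lt_div_sqrt_add {A B δ θ : ℝ} (hA : 0 < A) (hAB : A < B) (hδ : 0 < δ)
    (hθ : (A / B) ^ 2 / (1 - (A / B) ^ 2) * δ < θ) : A / √θ < B / √(θ + δ) := by
  have hB : 0 < B := hA.trans hAB
  have hθ0 : 0 < θ := (div_sq_div_one_sub_mul_pos hA hAB hδ).trans hθ
  have hsq : A ^ 2 * (θ + δ) < B ^ 2 * θ := by
    rw [div_mul_eq_mul_div, div_lt_iff₀ (one_sub_div_sq_pos hA hAB)] at hθ
    field_simp at hθ
    nlinarith
  rw [div_lt_div_iff₀ (sqrt_pos.2 hθ0) (sqrt_pos.2 (by linarith))]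
  calc A * √(θ + δ) = √(A ^ 2 * (θ + δ)) := by rw [sqrt_mul (by positivity), sqrt_sq hA.le]
    _ < √(B ^ 2 * θ) := sqrt_lt_sqrt (by positivity) hsq
    _ = B * √θ := by rw [sqrt_mul (by positivity), sqrt_sq hB.le]

lemma one_sub_cos_pos_and_lt {x y : ℝ} (hx : 0 < x) (hxy : x < y) (hy : y ≤ π) :
    0 < 1 - cos x ∧ 1 - cos x < 1 - cos y := by
  have h0x := cos_lt_cos_of_nonneg_of_le_pi le_rfl (hxy.le.trans hy) hx
  have hxy := cos_lt_cos_of_nonneg_of_le_pi hx.le hy hxy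
  rw [cos_zero] at h0x
  constructor <;> linarith

section

variable {φ₀ φ₁ : ℝ} (h0 : 0 < -φ₀) (h1 : -φ₀ < φ₁) (h2 : φ₁ < π)
include h0 h1 h2

lemma sub_mul_p_pos_of_eq_zero {θ θ' : ℝ} (hθ : 0 ≤ θ) (hθ' : 0 ≤ θ') (hne : θ ≠ θ')
    (hroot : p φ₀ (φ₁ - φ₀) θ = 0) : 0 < (θ' - θ) * p φ₀ (φ₁ - φ₀) θ' := by
  rw [p_eq_sinSqrtIntegral] at hroot ⊢
  simpa using sub_mul_sinSqrtIntegral_pos_of_eq_zero (a := φ₀) (s' := θ' - φ₀) (by linarith)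
    (by linarith) (by linarith) h2.le (by linarith) (by linarith) (sub_left_injective.ne hne)
    hroot

lemma p_pos_of_gt {θ : ℝ} (hθ : ((1 - cos φ₀) / (1 - cos φ₁)) ^ 2 /
      (1 - ((1 - cos φ₀) / (1 - cos φ₁)) ^ 2) * (φ₁ - φ₀) < θ) :
    0 < p φ₀ (φ₁ - φ₀) θ := by
  obtain ⟨hA, hAB⟩ := cos_neg φ₀ ▸ one_sub_cos_pos_and_lt h0 (by linarith) h2.le
  have hθ0 := (div_sq_div_one_sub_mul_pos hA hAB (by linarith)).trans hθ
  have hlt := div_sqrt_lt_div_sqrt_add hA hAB (by linarith) hθ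
  have hp := div_sqrt_add_le_sinSqrtIntegral (a := φ₀) (s := θ - φ₀) (by linarith) (by linarith)
    (by linarith) h2.le (by linarith)
  rw [add_sub_cancel, show φ₁ + (θ - φ₀) = θ + (φ₁ - φ₀) by ring, ← neg_sub, neg_div,
    ← p_eq_sinSqrtIntegral] at hp
  linarith

end

lemma continuousOn_p {φ₀ φ₁ : ℝ} (h : φ₀ ≤ φ₁) : ContinuousOn (p φ₀ (φ₁ - φ₀)) (Ici 0) := by
  simp only [funext (p_eq_sinSqrtIntegral φ₀ φ₁)]
  exact (continuousOn_sinSqrtIntegral h).comp (continuous_sub_right φ₀).continuousOn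
    fun θ hθ => show -φ₀ ≤ θ - φ₀ by linarith [mem_Ici.1 hθ]

theorem stmt3 (φ₀ φ₁ : ℝ) (h0 : 0 < -φ₀) (h1 : -φ₀ < φ₁) (h2 : φ₁ < π)
    (lam θs : ℝ)
    (hlam : lam = (1 - Real.cos φ₀) / (1 - Real.cos φ₁))
    (hθs : θs = lam ^ 2 / (1 - lam ^ 2) * (φ₁ - φ₀)) :
    (0 < p φ₀ (φ₁ - φ₀) 0 → ∀ θ, 0 ≤ θ → p φ₀ (φ₁ - φ₀) θ ≠ 0) ∧
    (p φ₀ (φ₁ - φ₀) 0 ≤ 0 →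
      (0 < lam ∧ lam < 1) ∧ 0 < θs ∧
      (∃! θ : ℝ, 0 ≤ θ ∧ p φ₀ (φ₁ - φ₀) θ = 0) ∧
      (∀ θ : ℝ, 0 ≤ θ → p φ₀ (φ₁ - φ₀) θ = 0 → θ ≤ θs)) := by
  obtain ⟨hA, hAB⟩ := cos_neg φ₀ ▸ one_sub_cos_pos_and_lt h0 (by linarith) h2.le
  have hlam01 : 0 < lam ∧ lam < 1 :=
    hlam ▸ ⟨div_pos hA (hA.trans hAB), (div_lt_one (hA.trans hAB)).2 hAB⟩
  have hθs0 : 0 < θs := by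
    rw [hθs, hlam]
    exact div_sq_div_one_sub_mul_pos hA hAB (by linarith)
  have hpos : ∀ θ, θs < θ → 0 < p φ₀ (φ₁ - φ₀) θ :=
    fun θ hθ => p_pos_of_gt h0 h1 h2 (hlam ▸ hθs ▸ hθ)
  refine ⟨fun hp0 θ hθ hroot => ?_, fun hp0 => ⟨hlam01, hθs0, ?_, fun θ _ hroot => ?_⟩⟩
  · rcases hθ.eq_or_lt with rfl | hθ
    · exact hp0.ne' hroot
    · nlinarith [sub_mul_p_pos_of_eq_zero h0 h1 h2 hθ.le le_rfl hθ.ne' hroot]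
  · obtain ⟨θ, hθ, hroot⟩ := intermediate_value_Icc (by linarith)
      ((continuousOn_p (by linarith)).mono Icc_subset_Ici_self)
      ⟨hp0, (hpos (θs + 1) (by linarith)).le⟩
    refine ⟨θ, ⟨hθ.1, hroot⟩, fun θ' ⟨hθ', hroot'⟩ => ?_⟩
    by_contra hne
    simpa [hroot'] using sub_mul_p_pos_of_eq_zero h0 h1 h2 hθ.1 hθ' (Ne.symm hne) hroot
  · by_contra! h
    exact (hpos θ h).ne' hroot
end

section
/- Let φ₀, φ₁ be real numbers with −π ≤ −φ₁ < φ₀ < 0. If p(0) > 0, then p(θ) > 0 for every θ ≥ 0. -/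
open Real

theorem stmt7 (φ₀ φ₁ : ℝ) (h0 : -π ≤ -φ₁) (h1 : -φ₁ < φ₀) (h2 : φ₀ < 0)
    (hp0 : 0 < p φ₀ (φ₁ - φ₀) 0) :
    ∀ θ : ℝ, 0 ≤ θ → 0 < p φ₀ (φ₁ - φ₀) θ := by
  intro θ hθ
  rcases eq_or_lt_of_le hθ with rfl | hθ'
  · exact hp0
  set δ : ℝ := φ₁ - φ₀ with hδdef
  have hφ₀ : -π < φ₀ := lt_of_le_of_lt h0 h1
  have hφ₁π : φ₁ ≤ π := by linarith
  have hφ₁pos : 0 < φ₁ := by linarith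
  have hδpos : 0 < δ := by simp only [hδdef]; linarith
  have hts : 0 < -φ₀ := by linarith
  have htsδ : -φ₀ < δ := by simp only [hδdef]; linarith
  -- rewrite p(0)
  have hp0eq : p φ₀ δ 0 = ∫ t in (0:ℝ)..δ, Real.sin (t + φ₀) / Real.sqrt t := by
    simp [p]
  -- rewrite p(θ)
  have hpθeq : p φ₀ δ θ = ∫ t in (0:ℝ)..δ, Real.sin (t + φ₀) / Real.sqrt (t + θ) := by
    have h : ∫ x in (0:ℝ)..δ, (fun u => Real.sin (u + φ₀ - θ) / Real.sqrt u) (x + θ)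
        = ∫ u in θ..(θ + δ), Real.sin (u + φ₀ - θ) / Real.sqrt u := by
      rw [intervalIntegral.integral_comp_add_right (fun u => Real.sin (u + φ₀ - θ) / Real.sqrt u) θ]
      norm_num [add_comm]
    rw [p, ← h]
    apply intervalIntegral.integral_congr
    intro t _
    simp only
    rw [show t + θ + φ₀ - θ = t + φ₀ by ring]
  set c : ℝ := Real.sqrt (-φ₀) / Real.sqrt (-φ₀ + θ) with hc
  have hcpos : 0 < c :=
    div_pos (Real.sqrt_pos.2 hts) (Real.sqrt_pos.2 (by linarith))
  -- integrability of the p(0) integrand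
  have hintf : IntervalIntegrable (fun t => Real.sin (t + φ₀) / Real.sqrt t) MeasureTheory.volume 0 δ := by
    by_contra hcon
    rw [hp0eq, intervalIntegral.integral_undef hcon] at hp0
    exact lt_irrefl 0 hp0
  -- integrability of the p(θ) integrand
  have hintg : IntervalIntegrable (fun t => Real.sin (t + φ₀) / Real.sqrt (t + θ)) MeasureTheory.volume 0 δ := by
    apply ContinuousOn.intervalIntegrable
    apply ContinuousOn.div
    · exact (Real.continuous_sin.comp (continuous_add_right φ₀)).continuousOn
    · exact (Real.continuous_sqrt.comp (continuous_add_right θ)).continuousOn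
    · intro t ht
      have ht0 : 0 ≤ t := by
        rcases Set.mem_uIcc.1 ht with h | h
        · exact h.1
        · linarith [h.1, h.2]
      have : 0 < t + θ := by linarith
      positivity
  -- a.e. pointwise comparison
  have hle : (fun t => c * (Real.sin (t + φ₀) / Real.sqrt t))
      ≤ᵐ[MeasureTheory.volume.restrict (Set.Icc (0:ℝ) δ)]
      fun t => Real.sin (t + φ₀) / Real.sqrt (t + θ) := by
    have hne : ∀ᵐ t ∂(MeasureTheory.volume.restrict (Set.Icc (0:ℝ) δ)), t ≠ 0 :=
      MeasureTheory.ae_restrict_of_ae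
        (MeasureTheory.compl_mem_ae_iff.2 (by simp : MeasureTheory.volume ({(0:ℝ)} : Set ℝ) = 0))
    have hmem : ∀ᵐ t ∂(MeasureTheory.volume.restrict (Set.Icc (0:ℝ) δ)), t ∈ Set.Icc (0:ℝ) δ :=
      MeasureTheory.ae_restrict_mem measurableSet_Icc
    filter_upwards [hne, hmem] with t htne htmem
    have ht0 : 0 < t := lt_of_le_of_ne htmem.1 (Ne.symm htne)
    have htδ : t ≤ δ := htmem.2
    have ha : 0 < Real.sqrt t := Real.sqrt_pos.2 ht0
    have hb : 0 < Real.sqrt (t + θ) := Real.sqrt_pos.2 (by linarith)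
    have has : 0 < Real.sqrt (-φ₀) := Real.sqrt_pos.2 hts
    have hbs : 0 < Real.sqrt (-φ₀ + θ) := Real.sqrt_pos.2 (by linarith)
    rcases le_total t (-φ₀) with hcase | hcase
    · -- sin (t + φ₀) ≤ 0
      have hs : Real.sin (t + φ₀) ≤ 0 :=
        Real.sin_nonpos_of_nonpos_of_neg_pi_le (by linarith) (by linarith)
      have hab : Real.sqrt t * Real.sqrt (-φ₀ + θ) ≤ Real.sqrt (-φ₀) * Real.sqrt (t + θ) := by
        rw [← Real.sqrt_mul ht0.le, ← Real.sqrt_mul hts.le]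
        exact Real.sqrt_le_sqrt (by nlinarith)
      rw [hc, div_mul_div_comm, div_le_div_iff₀ (by positivity) hb]
      nlinarith [mul_le_mul_of_nonpos_left hab hs]
    · -- sin (t + φ₀) ≥ 0
      have hs : 0 ≤ Real.sin (t + φ₀) :=
        Real.sin_nonneg_of_nonneg_of_le_pi (by linarith) (by simp only [hδdef] at htδ; linarith)
      have hab : Real.sqrt (-φ₀) * Real.sqrt (t + θ) ≤ Real.sqrt t * Real.sqrt (-φ₀ + θ) := by
        rw [← Real.sqrt_mul ht0.le, ← Real.sqrt_mul hts.le]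
        exact Real.sqrt_le_sqrt (by nlinarith)
      rw [hc, div_mul_div_comm, div_le_div_iff₀ (by positivity) hb]
      nlinarith [mul_le_mul_of_nonneg_left hab hs]
  have hmono : ∫ t in (0:ℝ)..δ, c * (Real.sin (t + φ₀) / Real.sqrt t)
      ≤ ∫ t in (0:ℝ)..δ, Real.sin (t + φ₀) / Real.sqrt (t + θ) :=
    intervalIntegral.integral_mono_ae_restrict hδpos.le (hintf.const_mul c) hintg hle
  have hcm : ∫ t in (0:ℝ)..δ, c * (Real.sin (t + φ₀) / Real.sqrt t)
      = c * ∫ t in (0:ℝ)..δ, Real.sin (t + φ₀) / Real.sqrt t := by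
    exact intervalIntegral.integral_const_mul c _
  rw [hpθeq]
  calc (0:ℝ) < c * p φ₀ δ 0 := mul_pos hcpos hp0
    _ = ∫ t in (0:ℝ)..δ, c * (Real.sin (t + φ₀) / Real.sqrt t) := by rw [hp0eq, hcm]
    _ ≤ _ := hmono
end

section
/- Let φ₀, φ₁ be real numbers with −π ≤ −φ₁ < φ₀ ≤ −π/2. Then p(0) < 0, i.e. ∫₀^{φ₁−φ₀} sin(u + φ₀)/√u du < 0. -/
open Real MeasureTheory intervalIntegral Set

lemma intInt_div_sqrt (g : ℝ → ℝ) (hg : Measurable g) (hb : ∀ x, |g x| ≤ 1) (a b : ℝ) :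
    IntervalIntegrable (fun u => g u / Real.sqrt u) volume a b := by
  apply IntervalIntegrable.mono_fun
    (intervalIntegral.intervalIntegrable_rpow' (by norm_num : (-1:ℝ) < -(1/2)))
  · exact (hg.div Real.continuous_sqrt.measurable).aestronglyMeasurable.restrict
  · filter_upwards with x
    rcases le_or_gt x 0 with hx | hx
    · simp [Real.sqrt_eq_zero'.mpr hx]
    · have hsx : 0 < Real.sqrt x := Real.sqrt_pos.mpr hx
      have hrw : x ^ (-(1/2) : ℝ) = 1 / Real.sqrt x := by
        rw [Real.rpow_neg hx.le, Real.sqrt_eq_rpow, inv_eq_one_div]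
      rw [Real.norm_eq_abs, Real.norm_eq_abs, hrw, abs_div,
        abs_of_nonneg (Real.sqrt_nonneg x),
        abs_of_nonneg (by positivity : (0:ℝ) ≤ 1 / Real.sqrt x)]
      exact div_le_div₀ zero_le_one (hb x) hsx le_rfl

lemma intInt_sin_div_sqrt (a b : ℝ) :
    IntervalIntegrable (fun u => Real.sin u / Real.sqrt u) volume a b :=
  intInt_div_sqrt _ Real.measurable_sin (fun x => abs_le.mpr ⟨Real.neg_one_le_sin x, Real.sin_le_one x⟩) a b

lemma intInt_cos_div_sqrt (a b : ℝ) :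
    IntervalIntegrable (fun u => Real.cos u / Real.sqrt u) volume a b :=
  intInt_div_sqrt _ Real.measurable_cos (fun x => abs_le.mpr ⟨Real.neg_one_le_cos x, Real.cos_le_one x⟩) a b

lemma intInt_one_div_sqrt (a b : ℝ) :
    IntervalIntegrable (fun u => 1 / Real.sqrt u) volume a b :=
  intInt_div_sqrt _ measurable_const (fun _ => by norm_num) a b

lemma S_pos {x : ℝ} (hx0 : 0 < x) (hx2 : x ≤ 2 * π) :
    0 < ∫ u in (0:ℝ)..x, Real.sin u / Real.sqrt u := by
  have hπ := Real.pi_pos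
  rcases le_or_gt x π with hxπ | hxπ
  · apply intervalIntegral.intervalIntegral_pos_of_pos_on (intInt_sin_div_sqrt 0 x) _ hx0
    intro u hu
    have h1 : 0 < Real.sin u := Real.sin_pos_of_pos_of_lt_pi hu.1 (lt_of_lt_of_le hu.2 hxπ)
    exact div_pos h1 (Real.sqrt_pos.mpr hu.1)
  · have hsplit1 : (∫ u in (0:ℝ)..(π/2), Real.sin u / Real.sqrt u) +
        (∫ u in (π/2:ℝ)..π, Real.sin u / Real.sqrt u) =
        ∫ u in (0:ℝ)..π, Real.sin u / Real.sqrt u :=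
      intervalIntegral.integral_add_adjacent_intervals (intInt_sin_div_sqrt 0 (π/2)) (intInt_sin_div_sqrt (π/2) π)
    have hsplit2 : (∫ u in (0:ℝ)..π, Real.sin u / Real.sqrt u) +
        (∫ u in π..x, Real.sin u / Real.sqrt u) =
        ∫ u in (0:ℝ)..x, Real.sin u / Real.sqrt u :=
      intervalIntegral.integral_add_adjacent_intervals (intInt_sin_div_sqrt 0 π) (intInt_sin_div_sqrt π x)
    -- piece 1
    have hp1 : (Real.sqrt (π/2))⁻¹ ≤ ∫ u in (0:ℝ)..(π/2), Real.sin u / Real.sqrt u := by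
      have hmono : (∫ u in (0:ℝ)..(π/2), Real.sin u * (Real.sqrt (π/2))⁻¹) ≤
          ∫ u in (0:ℝ)..(π/2), Real.sin u / Real.sqrt u := by
        apply intervalIntegral.integral_mono_on (by linarith)
          ((Real.continuous_sin.mul continuous_const).intervalIntegrable _ _)
          (intInt_sin_div_sqrt 0 (π/2))
        intro u hu
        rcases eq_or_lt_of_le hu.1 with h | h
        · simp [← h]
        · have hs : 0 ≤ Real.sin u := Real.sin_nonneg_of_nonneg_of_le_pi hu.1 (by linarith [hu.2])
          rw [div_eq_mul_inv]
          exact mul_le_mul_of_nonneg_left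
            (inv_anti₀ (Real.sqrt_pos.mpr h) (Real.sqrt_le_sqrt hu.2)) hs
      rwa [intervalIntegral.integral_mul_const, integral_sin, Real.cos_zero, Real.cos_pi_div_two,
        sub_zero, one_mul] at hmono
    -- piece 2
    have hp2 : (Real.sqrt π)⁻¹ ≤ ∫ u in (π/2:ℝ)..π, Real.sin u / Real.sqrt u := by
      have hmono : (∫ u in (π/2:ℝ)..π, Real.sin u * (Real.sqrt π)⁻¹) ≤
          ∫ u in (π/2:ℝ)..π, Real.sin u / Real.sqrt u := by
        apply intervalIntegral.integral_mono_on (by linarith)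
          ((Real.continuous_sin.mul continuous_const).intervalIntegrable _ _)
          (intInt_sin_div_sqrt (π/2) π)
        intro u hu
        have hs : 0 ≤ Real.sin u := Real.sin_nonneg_of_nonneg_of_le_pi (by linarith [hu.1]) hu.2
        rw [div_eq_mul_inv]
        exact mul_le_mul_of_nonneg_left
          (inv_anti₀ (Real.sqrt_pos.mpr (by linarith [hu.1])) (Real.sqrt_le_sqrt hu.2)) hs
      rwa [intervalIntegral.integral_mul_const, integral_sin, Real.cos_pi_div_two, Real.cos_pi,
        zero_sub, neg_neg, one_mul] at hmono
    -- piece 3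
    have hp3 : (-1 - Real.cos x) * (Real.sqrt π)⁻¹ ≤ ∫ u in π..x, Real.sin u / Real.sqrt u := by
      have hmono : (∫ u in π..x, Real.sin u * (Real.sqrt π)⁻¹) ≤
          ∫ u in π..x, Real.sin u / Real.sqrt u := by
        apply intervalIntegral.integral_mono_on hxπ.le
          ((Real.continuous_sin.mul continuous_const).intervalIntegrable _ _)
          (intInt_sin_div_sqrt π x)
        intro u hu
        have hs : Real.sin u ≤ 0 := by
          have : Real.sin u = -Real.sin (u - π) := by
            rw [Real.sin_sub_pi]; ring
          rw [this, neg_nonpos]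
          exact Real.sin_nonneg_of_nonneg_of_le_pi (by linarith [hu.1]) (by linarith [hu.2])
        rw [div_eq_mul_inv]
        apply mul_le_mul_of_nonpos_left _ hs
        exact inv_anti₀ (Real.sqrt_pos.mpr hπ) (Real.sqrt_le_sqrt hu.1)
      rw [intervalIntegral.integral_mul_const, integral_sin, Real.cos_pi] at hmono
      linarith [hmono]
    -- combine
    have hsq2 : Real.sqrt (π/2) < Real.sqrt π := by
      apply Real.sqrt_lt_sqrt (by positivity) (by linarith)
    have h1 : 0 < Real.sqrt (π/2) := Real.sqrt_pos.mpr (by positivity)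
    have h2 : 0 < Real.sqrt π := Real.sqrt_pos.mpr hπ
    have hc : Real.cos x ≤ 1 := Real.cos_le_one x
    have hkey : 0 < (Real.sqrt (π/2))⁻¹ + (Real.sqrt π)⁻¹ + (-1 - Real.cos x) * (Real.sqrt π)⁻¹ := by
      have hinv : (Real.sqrt π)⁻¹ < (Real.sqrt (π/2))⁻¹ := by
        exact inv_strictAnti₀ h1 hsq2
      nlinarith [inv_pos.mpr h2]
    linarith [hp1, hp2, hp3, hsplit1, hsplit2]


lemma C32_pos : 0 < ∫ u in (0:ℝ)..(π + π/2), Real.cos u / Real.sqrt u := by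
  have hπ := Real.pi_pos
  have hsplit1 : (∫ u in (0:ℝ)..(π/2), Real.cos u / Real.sqrt u) +
      (∫ u in (π/2:ℝ)..π, Real.cos u / Real.sqrt u) =
      ∫ u in (0:ℝ)..π, Real.cos u / Real.sqrt u :=
    intervalIntegral.integral_add_adjacent_intervals (intInt_cos_div_sqrt 0 (π/2)) (intInt_cos_div_sqrt (π/2) π)
  have hsplit2 : (∫ u in (0:ℝ)..π, Real.cos u / Real.sqrt u) +
      (∫ u in π..(π + π/2), Real.cos u / Real.sqrt u) =
      ∫ u in (0:ℝ)..(π + π/2), Real.cos u / Real.sqrt u :=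
    intervalIntegral.integral_add_adjacent_intervals (intInt_cos_div_sqrt 0 π) (intInt_cos_div_sqrt π (π + π/2))
  -- reflection for the middle piece
  have e1 := intervalIntegral.integral_comp_sub_left (a := 0) (b := π/2)
    (fun u => Real.cos u / Real.sqrt u) π
  rw [show π - π/2 = π/2 by ring, sub_zero] at e1
  simp only [Real.cos_pi_sub] at e1
  -- translation for the last piece
  have e2 := intervalIntegral.integral_comp_add_right (a := 0) (b := π/2)
    (fun u => Real.cos u / Real.sqrt u) π
  rw [show (0:ℝ) + π = π by ring] at e2
  simp only [Real.cos_add_pi] at e2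
  rw [show π/2 + π = π + π/2 by ring] at e2
  -- continuity facts
  have hcont1 : ContinuousOn (fun x : ℝ => -Real.cos x / Real.sqrt (π - x)) (Set.uIcc 0 (π/2)) := by
    apply ContinuousOn.div (Real.continuous_cos.neg.continuousOn)
      ((Real.continuous_sqrt.comp (continuous_const.sub continuous_id)).continuousOn)
    intro x hx
    rw [Set.uIcc_of_le (by linarith : (0:ℝ) ≤ π/2)] at hx
    have : 0 < π - x := by linarith [hx.2]
    exact ne_of_gt (Real.sqrt_pos.mpr this)
  have hint1 : IntervalIntegrable (fun x : ℝ => -Real.cos x / Real.sqrt (π - x)) volume 0 (π/2) :=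
    hcont1.intervalIntegrable
  have hint2 : IntervalIntegrable (fun x : ℝ => -Real.cos x / Real.sqrt (x + π)) volume 0 (π/2) := by
    apply ContinuousOn.intervalIntegrable
    apply ContinuousOn.div (Real.continuous_cos.neg.continuousOn)
      ((Real.continuous_sqrt.comp (continuous_id.add continuous_const)).continuousOn)
    intro x hx
    rw [Set.uIcc_of_le (by linarith : (0:ℝ) ≤ π/2)] at hx
    have : 0 < x + π := by linarith [hx.1]
    exact ne_of_gt (Real.sqrt_pos.mpr this)
  -- the last piece dominates a copy of the middle piece
  have hmono1 : (∫ x in (0:ℝ)..(π/2), -Real.cos x / Real.sqrt (π - x)) ≤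
      ∫ x in (0:ℝ)..(π/2), -Real.cos x / Real.sqrt (x + π) := by
    apply intervalIntegral.integral_mono_on (by linarith) hint1 hint2
    intro x hx
    have hc : 0 ≤ Real.cos x := Real.cos_nonneg_of_mem_Icc ⟨by linarith [hx.1], by linarith [hx.2]⟩
    have hs1 : 0 < Real.sqrt (π - x) := Real.sqrt_pos.mpr (by linarith [hx.2])
    have hs2 : Real.sqrt (π - x) ≤ Real.sqrt (x + π) := Real.sqrt_le_sqrt (by linarith [hx.1])
    rw [div_eq_mul_inv, div_eq_mul_inv]
    exact mul_le_mul_of_nonpos_left (inv_anti₀ hs1 hs2) (by linarith)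
  -- combine into a single integral
  have hcomb : (∫ x in (0:ℝ)..(π/2), Real.cos x / Real.sqrt x) +
      (2:ℝ) * (∫ x in (0:ℝ)..(π/2), -Real.cos x / Real.sqrt (π - x)) =
      ∫ x in (0:ℝ)..(π/2),
        (Real.cos x / Real.sqrt x + 2 * (-Real.cos x / Real.sqrt (π - x))) := by
    rw [← intervalIntegral.integral_const_mul,
      ← intervalIntegral.integral_add (intInt_cos_div_sqrt 0 (π/2)) (hint1.const_mul 2)]
  have hsqrtsub : Continuous (fun x : ℝ => Real.sqrt (π - x)) := by
    exact Real.continuous_sqrt.comp (continuous_const.sub continuous_id')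
  have hint3 : IntervalIntegrable (fun x : ℝ => 2 / Real.sqrt (π - x)) volume 0 (π/2) := by
    apply ContinuousOn.intervalIntegrable
    apply ContinuousOn.div continuousOn_const hsqrtsub.continuousOn
    intro x hx
    rw [Set.uIcc_of_le (by linarith : (0:ℝ) ≤ π/2)] at hx
    exact ne_of_gt (Real.sqrt_pos.mpr (by linarith [hx.2]))
  -- key pointwise comparison
  have hkey : (∫ x in (0:ℝ)..(π/2), Real.cos (π/5) * (1 / Real.sqrt x - 2 / Real.sqrt (π - x))) ≤
      ∫ x in (0:ℝ)..(π/2),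
        (Real.cos x / Real.sqrt x + 2 * (-Real.cos x / Real.sqrt (π - x))) := by
    rw [intervalIntegral.integral_of_le (by linarith : (0:ℝ) ≤ π/2),
      intervalIntegral.integral_of_le (by linarith : (0:ℝ) ≤ π/2)]
    apply MeasureTheory.setIntegral_mono_on
    · exact (((intInt_one_div_sqrt 0 (π/2)).sub hint3).const_mul _).1
    · exact ((intInt_cos_div_sqrt 0 (π/2)).add (hint1.const_mul 2)).1
    · exact measurableSet_Ioc
    · intro x hx
      have hx0 : 0 < x := hx.1
      have hx2 : x ≤ π/2 := hx.2
      have hsx : 0 < Real.sqrt x := Real.sqrt_pos.mpr hx0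
      have hsp : 0 < Real.sqrt (π - x) := Real.sqrt_pos.mpr (by linarith)
      have hrhs : Real.cos x / Real.sqrt x + 2 * (-Real.cos x / Real.sqrt (π - x)) =
          Real.cos x * (1 / Real.sqrt x - 2 / Real.sqrt (π - x)) := by ring
      rw [hrhs]
      have hsqrt4 : Real.sqrt (4 * x) = 2 * Real.sqrt x := by
        rw [show (4:ℝ) * x = 2^2 * x by ring, Real.sqrt_mul (by positivity) x,
          Real.sqrt_sq (by norm_num : (0:ℝ) ≤ 2)]
      rcases le_or_gt x (π/5) with h5 | h5
      · have hd : 0 ≤ 1 / Real.sqrt x - 2 / Real.sqrt (π - x) := by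
          have h4 : Real.sqrt (4 * x) ≤ Real.sqrt (π - x) := Real.sqrt_le_sqrt (by linarith)
          rw [hsqrt4] at h4
          have : 2 / Real.sqrt (π - x) ≤ 1 / Real.sqrt x := by
            rw [div_le_div_iff₀ hsp hsx]
            linarith
          linarith
        have hcos : Real.cos (π/5) ≤ Real.cos x :=
          Real.cos_le_cos_of_nonneg_of_le_pi hx0.le (by linarith) h5
        exact mul_le_mul_of_nonneg_right hcos hd
      · have hd : 1 / Real.sqrt x - 2 / Real.sqrt (π - x) ≤ 0 := by
          have h4 : Real.sqrt (π - x) ≤ Real.sqrt (4 * x) := Real.sqrt_le_sqrt (by linarith)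
          rw [hsqrt4] at h4
          have : 1 / Real.sqrt x ≤ 2 / Real.sqrt (π - x) := by
            rw [div_le_div_iff₀ hsx hsp]
            linarith
          linarith
        have hcos : Real.cos x ≤ Real.cos (π/5) :=
          Real.cos_le_cos_of_nonneg_of_le_pi (by positivity) (by linarith) h5.le
        exact mul_le_mul_of_nonpos_right hcos hd
  -- evaluate the lower bound integral by FTC
  have hdd_int : IntervalIntegrable (fun x : ℝ => 1 / Real.sqrt x - 2 / Real.sqrt (π - x))
      volume 0 (π/2) := (intInt_one_div_sqrt 0 (π/2)).sub hint3
  have hderiv : ∀ x ∈ Set.Ioo (0:ℝ) (π/2),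
      HasDerivWithinAt (fun x : ℝ => 2 * Real.sqrt x + 4 * Real.sqrt (π - x))
        (1 / Real.sqrt x - 2 / Real.sqrt (π - x)) (Set.Ioi x) x := by
    intro x hx
    have hx0 : 0 < x := hx.1
    have hxp : 0 < π - x := by linarith [hx.2]
    have h1 : HasDerivAt (fun y : ℝ => 2 * Real.sqrt y) (2 * (1 / (2 * Real.sqrt x))) x :=
      (Real.hasDerivAt_sqrt (ne_of_gt hx0)).const_mul 2
    have h2 : HasDerivAt (fun y : ℝ => π - y) (-1) x := (hasDerivAt_id x).const_sub π
    have h3 : HasDerivAt (fun y : ℝ => Real.sqrt (π - y))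
        (1 / (2 * Real.sqrt (π - x)) * (-1)) x :=
      (Real.hasDerivAt_sqrt (ne_of_gt hxp)).comp x h2
    have h4 := (h1.add (h3.const_mul 4)).hasDerivWithinAt (s := Set.Ioi x)
    have hsx : Real.sqrt x ≠ 0 := ne_of_gt (Real.sqrt_pos.mpr hx0)
    have hsp : Real.sqrt (π - x) ≠ 0 := ne_of_gt (Real.sqrt_pos.mpr hxp)
    have heq : 1 / Real.sqrt x - 2 / Real.sqrt (π - x) =
        2 * (1 / (2 * Real.sqrt x)) + 4 * (1 / (2 * Real.sqrt (π - x)) * (-1)) := by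
      field_simp
      ring
    rw [heq]
    exact h4
  have hftc : (∫ x in (0:ℝ)..(π/2), (1 / Real.sqrt x - 2 / Real.sqrt (π - x))) =
      6 * Real.sqrt (π/2) - 4 * Real.sqrt π := by
    have h := intervalIntegral.integral_eq_sub_of_hasDeriv_right_of_le
      (f := fun x : ℝ => 2 * Real.sqrt x + 4 * Real.sqrt (π - x))
      (f' := fun x : ℝ => 1 / Real.sqrt x - 2 / Real.sqrt (π - x))
      (by linarith : (0:ℝ) ≤ π/2)
      (((continuous_const.mul Real.continuous_sqrt).add
        (continuous_const.mul hsqrtsub)).continuousOn)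
      hderiv hdd_int
    rw [h]
    simp only [Real.sqrt_zero, sub_zero, mul_zero]
    rw [show π - π/2 = π/2 by ring]
    ring
  have hval : (∫ x in (0:ℝ)..(π/2), Real.cos (π/5) * (1 / Real.sqrt x - 2 / Real.sqrt (π - x))) =
      Real.cos (π/5) * (6 * Real.sqrt (π/2) - 4 * Real.sqrt π) := by
    rw [intervalIntegral.integral_const_mul, hftc]
  have hpos : 0 < Real.cos (π/5) * (6 * Real.sqrt (π/2) - 4 * Real.sqrt π) := by
    have hc : 0 < Real.cos (π/5) := Real.cos_pos_of_mem_Ioo ⟨by linarith, by linarith⟩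
    have ha : 0 < Real.sqrt (π/2) := Real.sqrt_pos.mpr (by linarith)
    have hb : 0 < Real.sqrt π := Real.sqrt_pos.mpr hπ
    have ha2 : Real.sqrt (π/2) ^ 2 = π/2 := Real.sq_sqrt (by linarith)
    have hb2 : Real.sqrt π ^ 2 = π := Real.sq_sqrt hπ.le
    have : 0 < 6 * Real.sqrt (π/2) - 4 * Real.sqrt π := by nlinarith
    exact mul_pos hc this
  linarith [hmono1, hkey, hcomb, hval, e1, e2, hsplit1, hsplit2, hpos]

lemma C_pos {x : ℝ} (hx0 : 0 < x) (hx2 : x ≤ 2 * π) :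
    0 < ∫ u in (0:ℝ)..x, Real.cos u / Real.sqrt u := by
  have hπ := Real.pi_pos
  rcases le_or_gt x (π/2) with h | h
  · apply intervalIntegral.intervalIntegral_pos_of_pos_on (intInt_cos_div_sqrt 0 x) _ hx0
    intro u hu
    have h1 : 0 < Real.cos u := Real.cos_pos_of_mem_Ioo
      ⟨by linarith [hu.1], by linarith [hu.2]⟩
    exact div_pos h1 (Real.sqrt_pos.mpr hu.1)
  rcases le_or_gt x (π + π/2) with h' | h'
  · have hadd : (∫ u in (0:ℝ)..x, Real.cos u / Real.sqrt u) +
        (∫ u in x..(π + π/2), Real.cos u / Real.sqrt u) =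
        ∫ u in (0:ℝ)..(π + π/2), Real.cos u / Real.sqrt u :=
      intervalIntegral.integral_add_adjacent_intervals (intInt_cos_div_sqrt 0 x)
        (intInt_cos_div_sqrt x (π + π/2))
    have hle : (∫ u in x..(π + π/2), Real.cos u / Real.sqrt u) ≤
        ∫ u in x..(π + π/2), (0:ℝ) := by
      apply intervalIntegral.integral_mono_on h' (intInt_cos_div_sqrt x (π + π/2))
        (intervalIntegrable_const)
      intro u hu
      have hc : Real.cos u ≤ 0 := Real.cos_nonpos_of_pi_div_two_le_of_le
        (by linarith [hu.1]) (by linarith [hu.2])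
      exact div_nonpos_of_nonpos_of_nonneg hc (Real.sqrt_nonneg u)
    rw [intervalIntegral.integral_const, smul_zero] at hle
    linarith [C32_pos]
  · have hadd : (∫ u in (0:ℝ)..(π + π/2), Real.cos u / Real.sqrt u) +
        (∫ u in (π + π/2)..x, Real.cos u / Real.sqrt u) =
        ∫ u in (0:ℝ)..x, Real.cos u / Real.sqrt u :=
      intervalIntegral.integral_add_adjacent_intervals (intInt_cos_div_sqrt 0 (π + π/2))
        (intInt_cos_div_sqrt (π + π/2) x)
    have hge : (0:ℝ) ≤ ∫ u in (π + π/2)..x, Real.cos u / Real.sqrt u := by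
      apply intervalIntegral.integral_nonneg h'.le
      intro u hu
      have hc : 0 ≤ Real.cos u := by
        rw [← Real.cos_sub_two_pi]
        exact Real.cos_nonneg_of_mem_Icc ⟨by linarith [hu.1], by linarith [hu.2]⟩
      exact div_nonneg hc (Real.sqrt_nonneg u)
    linarith [C32_pos]

theorem stmt9 (φ₀ φ₁ : ℝ) (h0 : -π ≤ -φ₁) (h1 : -φ₁ < φ₀) (h2 : φ₀ ≤ -(π / 2)) :
    (∫ u in (0:ℝ)..(φ₁ - φ₀), Real.sin (u + φ₀) / Real.sqrt u) < 0 := by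
  have hπ := Real.pi_pos
  set δ := φ₁ - φ₀ with hδdef
  have hδ0 : 0 < δ := by
    have : φ₀ < π/2 := by linarith
    have : π/2 < φ₁ := by linarith
    simp only [hδdef]; linarith
  have hδ2 : δ ≤ 2 * π := by simp only [hδdef]; linarith
  have hsin : Real.sin φ₀ < 0 :=
    Real.sin_neg_of_neg_of_neg_pi_lt (by linarith) (by linarith)
  have hcos : Real.cos φ₀ ≤ 0 := by
    have h := Real.cos_nonpos_of_pi_div_two_le_of_le (x := -φ₀) (by linarith) (by linarith)
    rwa [Real.cos_neg] at h
  have hrw : (∫ u in (0:ℝ)..δ, Real.sin (u + φ₀) / Real.sqrt u)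
      = Real.cos φ₀ * (∫ u in (0:ℝ)..δ, Real.sin u / Real.sqrt u)
        + Real.sin φ₀ * (∫ u in (0:ℝ)..δ, Real.cos u / Real.sqrt u) := by
    rw [← intervalIntegral.integral_const_mul, ← intervalIntegral.integral_const_mul,
        ← intervalIntegral.integral_add ((intInt_sin_div_sqrt 0 δ).const_mul _)
          ((intInt_cos_div_sqrt 0 δ).const_mul _)]
    apply intervalIntegral.integral_congr
    intro u _
    simp only [Real.sin_add]
    ring
  rw [hrw]
  have hS := S_pos hδ0 hδ2
  have hC := C_pos hδ0 hδ2
  nlinarith [mul_pos (neg_pos.mpr hsin) hC, mul_nonneg (neg_nonneg.mpr hcos) hS.le]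
end

section
/- Let (x₀,y₀), (x₁,y₁) be points in the plane and θ₀, θ₁ real angles. Suppose r > 0 and φ ∈ ℝ satisfy x₁ − x₀ = r·cos φ and y₁ − y₀ = r·sin φ. Set φ₀ = θ₀ − φ, φ₁ = θ₁ − φ, δ = φ₁ − φ₀. Let A be a real number with Y(2A, δ−A, φ₀) = 0 and X(2A, δ−A, φ₀) > 0, and define L = r / X(2A, δ−A, φ₀), κ = (δ−A)/L, κ' = 2A/L². Then L > 0 and the clothoid with these parameters solves the G¹ Hermite interpolation problem: ∫₀^L cos(κ'·s²/2 + κ·s + θ₀) ds = x₁ − x₀, ∫₀^L sin(κ'·s²/2 + κ·s + θ₀) ds = y₁ − y₀, and κ'·L²/2 + κ·L + θ₀ = θ₁. -/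
open Real

lemma cont_arg (a b c : ℝ) : Continuous (fun τ : ℝ => a * τ ^ 2 / 2 + b * τ + c) := by
  continuity

lemma cos_split (a b c φ : ℝ) :
    (∫ τ in (0:ℝ)..1, Real.cos (a * τ ^ 2 / 2 + b * τ + (c + φ))) =
      Real.cos φ * X a b c - Real.sin φ * Y a b c := by
  rw [intervalIntegral.integral_congr
      (g := fun τ => Real.cos (a * τ ^ 2 / 2 + b * τ + c) * Real.cos φ -
        Real.sin (a * τ ^ 2 / 2 + b * τ + c) * Real.sin φ)
      (fun τ _ => by rw [show a * τ ^ 2 / 2 + b * τ + (c + φ) =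
        (a * τ ^ 2 / 2 + b * τ + c) + φ by ring, Real.cos_add])]
  rw [intervalIntegral.integral_sub
      ((by continuity : Continuous fun τ : ℝ => Real.cos (a * τ ^ 2 / 2 + b * τ + c) * Real.cos φ).intervalIntegrable 0 1)
      ((by continuity : Continuous fun τ : ℝ => Real.sin (a * τ ^ 2 / 2 + b * τ + c) * Real.sin φ).intervalIntegrable 0 1),
    intervalIntegral.integral_mul_const, intervalIntegral.integral_mul_const]
  rw [X, Y]; ring

lemma sin_split (a b c φ : ℝ) :
    (∫ τ in (0:ℝ)..1, Real.sin (a * τ ^ 2 / 2 + b * τ + (c + φ))) =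
      Real.cos φ * Y a b c + Real.sin φ * X a b c := by
  rw [intervalIntegral.integral_congr
      (g := fun τ => Real.sin (a * τ ^ 2 / 2 + b * τ + c) * Real.cos φ +
        Real.cos (a * τ ^ 2 / 2 + b * τ + c) * Real.sin φ)
      (fun τ _ => by rw [show a * τ ^ 2 / 2 + b * τ + (c + φ) =
        (a * τ ^ 2 / 2 + b * τ + c) + φ by ring, Real.sin_add])]
  rw [intervalIntegral.integral_add
      ((by continuity : Continuous fun τ : ℝ => Real.sin (a * τ ^ 2 / 2 + b * τ + c) * Real.cos φ).intervalIntegrable 0 1)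
      ((by continuity : Continuous fun τ : ℝ => Real.cos (a * τ ^ 2 / 2 + b * τ + c) * Real.sin φ).intervalIntegrable 0 1),
    intervalIntegral.integral_mul_const, intervalIntegral.integral_mul_const]
  rw [X, Y]; ring

lemma sub_lemma (L : ℝ) (f : ℝ → ℝ) :
    (∫ s in (0:ℝ)..L, f s) = L * ∫ τ in (0:ℝ)..1, f (L * τ) := by
  rw [← smul_eq_mul, intervalIntegral.smul_integral_comp_mul_left f L, mul_zero, mul_one]

theorem stmt12 (x₀ y₀ x₁ y₁ θ₀ θ₁ r φ : ℝ) (hr : 0 < r)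
    (hx : x₁ - x₀ = r * Real.cos φ) (hy : y₁ - y₀ = r * Real.sin φ)
    (φ₀ φ₁ δ : ℝ) (hφ₀ : φ₀ = θ₀ - φ) (hφ₁ : φ₁ = θ₁ - φ) (hδ : δ = φ₁ - φ₀)
    (A : ℝ)
    (hY : Y (2 * A) (δ - A) φ₀ = 0)
    (hX : 0 < X (2 * A) (δ - A) φ₀)
    (L κ κ' : ℝ)
    (hL : L = r / X (2 * A) (δ - A) φ₀)
    (hκ : κ = (δ - A) / L)
    (hκ' : κ' = 2 * A / L ^ 2) :
    0 < L ∧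
    (∫ s in (0:ℝ)..L, Real.cos (κ' * s ^ 2 / 2 + κ * s + θ₀)) = x₁ - x₀ ∧
    (∫ s in (0:ℝ)..L, Real.sin (κ' * s ^ 2 / 2 + κ * s + θ₀)) = y₁ - y₀ ∧
    κ' * L ^ 2 / 2 + κ * L + θ₀ = θ₁ := by
  have hL0 : 0 < L := hL ▸ div_pos hr hX
  have hLne : L ≠ 0 := ne_of_gt hL0
  have hκL : κ * L = δ - A := by rw [hκ]; field_simp
  have hκ'L : κ' * L ^ 2 = 2 * A := by rw [hκ']; field_simp
  have hθ : θ₀ = φ₀ + φ := by rw [hφ₀]; ring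
  have harg : ∀ τ : ℝ, κ' * (L * τ) ^ 2 / 2 + κ * (L * τ) + θ₀ =
      (2 * A) * τ ^ 2 / 2 + (δ - A) * τ + (φ₀ + φ) := by
    intro τ
    rw [hθ, show κ' * (L * τ) ^ 2 / 2 + κ * (L * τ) + (φ₀ + φ) =
      (κ' * L ^ 2) * τ ^ 2 / 2 + (κ * L) * τ + (φ₀ + φ) by ring, hκL, hκ'L]
  have hcos : (∫ s in (0:ℝ)..L, Real.cos (κ' * s ^ 2 / 2 + κ * s + θ₀)) =
      L * ∫ τ in (0:ℝ)..1, Real.cos ((2 * A) * τ ^ 2 / 2 + (δ - A) * τ + (φ₀ + φ)) := by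
    rw [sub_lemma L (fun s => Real.cos (κ' * s ^ 2 / 2 + κ * s + θ₀))]
    congr 1
    exact intervalIntegral.integral_congr (fun τ _ => by rw [harg τ])
  have hsin : (∫ s in (0:ℝ)..L, Real.sin (κ' * s ^ 2 / 2 + κ * s + θ₀)) =
      L * ∫ τ in (0:ℝ)..1, Real.sin ((2 * A) * τ ^ 2 / 2 + (δ - A) * τ + (φ₀ + φ)) := by
    rw [sub_lemma L (fun s => Real.sin (κ' * s ^ 2 / 2 + κ * s + θ₀))]
    congr 1
    exact intervalIntegral.integral_congr (fun τ _ => by rw [harg τ])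
  have hLX : L * X (2 * A) (δ - A) φ₀ = r := by
    rw [hL]; field_simp
  refine ⟨hL0, ?_, ?_, ?_⟩
  · rw [hcos, cos_split, hY, hx]
    rw [show L * (Real.cos φ * X (2 * A) (δ - A) φ₀ - Real.sin φ * 0) =
      (L * X (2 * A) (δ - A) φ₀) * Real.cos φ by ring, hLX]
  · rw [hsin, sin_split, hY, hy]
    rw [show L * (Real.cos φ * 0 + Real.sin φ * X (2 * A) (δ - A) φ₀) =
      (L * X (2 * A) (δ - A) φ₀) * Real.sin φ by ring, hLX]
  · rw [show κ' * L ^ 2 / 2 + κ * L + θ₀ = (κ' * L ^ 2) / 2 + κ * L + θ₀ by ring,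
      hκ'L, hκL, hδ, hφ₁, hφ₀]; ring
end
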